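/- The game influence is a nonzugzwang game: for every relevant position G, s^L_1(G) ≥ s^L_2(G) and s^R_1(G) ≥ s^R_2(G); equivalently, Ls(G) ≥ Rs(G). -/

import Mathlib

/-!
In a relevant position the set removed by a Right move `u` is exactly the set of vertices all of
whose Left ancestors reach `u`; dually, a Left move `x` removes the vertices all of whose Right
descendants are reached from `x`. Consequently a Left move `x` and a Right move `u` with no path
from `x` to `u` commute, and two Right moves `u`, `y` played in either order remove the vertices
all of whose Left ancestors reach `u` or `y`: either they commute or one absorbs the other.
Using this, induction on the number of vertices shows that a Right move never increases `s^L_1`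
or `s^L_2`, so `s^L_2(G) ≤ s^L_1(G_y) ≤ s^L_1(G)` for Right's best first move `y`. The inequality
for Right is the one for Left in the position with reversed arcs and swapped colours.
-/

namespace Influence

open Finset

/-- A position of the game `influence`: a finite directed graph with vertex set `V`,
arc set `A`, and the set `left` of Left (black) vertices; Right's vertices are `V \ left`. -/
structure Pos (α : Type) [DecidableEq α] where
  V : Finset α
  A : Finset (α × α)
  left : Finset α

variable {α : Type} [DecidableEq α]

namespace Pos

/-- The set of Right vertices. -/
def R (G : Pos α) : Finset α := G.V \ G.left

/-- Well-formedness: arcs join vertices, and Left vertices are vertices. -/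
def WF (G : Pos α) : Prop :=
  (∀ p ∈ G.A, p.1 ∈ G.V ∧ p.2 ∈ G.V) ∧ G.left ⊆ G.V

open Classical in
/-- `Succ G x`: vertices reachable from `x` by a directed path (including `x` itself). -/
noncomputable def Succ (G : Pos α) (x : α) : Finset α :=
  G.V.filter (fun z => Relation.ReflTransGen (fun a b => (a, b) ∈ G.A) x z)

open Classical in
/-- `Pred G y`: vertices from which `y` is reachable by a directed path (including `y`). -/
noncomputable def Pred (G : Pos α) (y : α) : Finset α :=
  G.V.filter (fun z => Relation.ReflTransGen (fun a b => (a, b) ∈ G.A) z y)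

open Classical in
noncomputable def ForcL (G : Pos α) : Finset α :=
  G.left.filter (fun x => G.Succ x ⊆ G.left)

open Classical in
noncomputable def ForcR (G : Pos α) : Finset α :=
  G.R.filter (fun y => G.Pred y ⊆ G.R)

noncomputable def Forc (G : Pos α) : Finset α := G.ForcL ∪ G.ForcR

/-- A relevant position: no forced vertices. -/
def Relevant (G : Pos α) : Prop := G.Forc = ∅

/-- The induced subgraph `G ∖ S` on `V(G) \ S`. -/
def erase (G : Pos α) (S : Finset α) : Pos α :=
  ⟨G.V \ S, G.A.filter (fun p => p.1 ∈ G.V \ S ∧ p.2 ∈ G.V \ S), G.left \ S⟩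

open Classical in
/-- The set of vertices removed when playing `x`:  for `x ∈ L`,
`Rmv(G,x) = Succ(G,x) ∪ Forc(G ∖ Succ(G,x))`; for `y ∈ R`,
`Rmv(G,y) = Pred(G,y) ∪ Forc(G ∖ Pred(G,y))`. -/
noncomputable def Rmv (G : Pos α) (x : α) : Finset α :=
  if x ∈ G.left then G.Succ x ∪ (G.erase (G.Succ x)).Forc
  else G.Pred x ∪ (G.erase (G.Pred x)).Forc

/-- The resulting relevant position `G_x` after the move `x`. -/
noncomputable def move (G : Pos α) (x : α) : Pos α := G.erase (G.Rmv x)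

mutual
/-- Auxiliary (fuel-indexed) score of Left playing first. -/
noncomputable def sL1Aux : ℕ → Pos α → ℕ
  | 0, _ => 0
  | k + 1, G =>
      if G.left.Nonempty then
        G.left.sup (fun x => (G.Rmv x).card + sL2Aux k (G.move x))
      else 0

/-- Auxiliary (fuel-indexed) score of Left playing second. -/
noncomputable def sL2Aux : ℕ → Pos α → ℕ
  | 0, _ => 0
  | k + 1, G =>
      if h : G.R.Nonempty then G.R.inf' h (fun y => sL1Aux k (G.move y))
      else 0
end

mutual
/-- Auxiliary (fuel-indexed) score of Right playing first. -/
noncomputable def sR1Aux : ℕ → Pos α → ℕ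
  | 0, _ => 0
  | k + 1, G =>
      if G.R.Nonempty then
        G.R.sup (fun y => (G.Rmv y).card + sR2Aux k (G.move y))
      else 0

/-- Auxiliary (fuel-indexed) score of Right playing second. -/
noncomputable def sR2Aux : ℕ → Pos α → ℕ
  | 0, _ => 0
  | k + 1, G =>
      if h : G.left.Nonempty then G.left.inf' h (fun x => sR1Aux k (G.move x))
      else 0
end

/-- `s^L_1(G)`: the score of Left when Left plays first (optimal play). -/
noncomputable def sL1 (G : Pos α) : ℕ := sL1Aux G.V.card G

/-- `s^L_2(G)`: the score of Left when Right plays first (optimal play). -/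
noncomputable def sL2 (G : Pos α) : ℕ := sL2Aux G.V.card G

/-- `s^R_1(G)`: the score of Right when Right plays first (optimal play). -/
noncomputable def sR1 (G : Pos α) : ℕ := sR1Aux G.V.card G

/-- `s^R_2(G)`: the score of Right when Left plays first (optimal play). -/
noncomputable def sR2 (G : Pos α) : ℕ := sR2Aux G.V.card G

/-- The Left score `Ls(G) = s^L_1(G) - s^R_2(G)`. -/
noncomputable def Ls (G : Pos α) : ℤ := (G.sL1 : ℤ) - (G.sR2 : ℤ)

/-- The Right score `Rs(G) = s^L_2(G) - s^R_1(G)`. -/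
noncomputable def Rs (G : Pos α) : ℤ := (G.sL2 : ℤ) - (G.sR1 : ℤ)

/-- Disjoint union (game sum) of two positions. -/
def union (G G' : Pos α) : Pos α := ⟨G.V ∪ G'.V, G.A ∪ G'.A, G.left ∪ G'.left⟩

/-- The empty position. -/
protected def empty : Pos α := ⟨∅, ∅, ∅⟩

end Pos

/-- The sum of a finite list of positions. -/
def sumList (l : List (Pos α)) : Pos α := l.foldr Pos.union Pos.empty

open Classical in
/-- `G` is a segment: its vertex set is a set of at least two consecutive integers,
Left's vertices are the even ones, Right's the odd ones, and there is an arc from each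
even vertex to each of its (odd) neighbours `±1` lying in the vertex set. -/
def IsSegment (G : Pos ℤ) : Prop :=
  2 ≤ G.V.card ∧
  (∀ i j k : ℤ, i ∈ G.V → j ∈ G.V → i ≤ k → k ≤ j → k ∈ G.V) ∧
  G.left = G.V.filter (fun n => Even n) ∧
  G.A = (G.V ×ˢ G.V).filter (fun p => Even p.1 ∧ (p.2 = p.1 + 1 ∨ p.2 = p.1 - 1))

/-- `G` is the finite disjoint union (game sum) of the list `l` of segments. -/
def IsSegUnion (G : Pos ℤ) (l : List (Pos ℤ)) : Prop :=
  (∀ H ∈ l, IsSegment H) ∧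
  l.Pairwise (fun H H' => Disjoint H.V H'.V) ∧
  G = sumList l


open Classical in
/-- `G` is an alternated cycle: obtained from a segment `S` with an even number of
vertices by adding the arc `(x, y)` where `x` is the endpoint of `S` in `L` (even) and
`y` the endpoint in `R` (odd). -/
def IsAltCycle (G : Pos ℤ) : Prop :=
  ∃ (S : Pos ℤ) (x y : ℤ), IsSegment S ∧ Even S.V.card ∧
    x ∈ S.V ∧ y ∈ S.V ∧ Even x ∧ ¬ Even y ∧
    (∀ z ∈ S.V, min x y ≤ z ∧ z ≤ max x y) ∧
    G.V = S.V ∧ G.left = S.left ∧ G.A = insert (x, y) S.A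

open Classical in
/-- `T` is (a copy of) the oriented tree `T_n^c`: a rooted tree of depth `n+1`, all arcs
oriented from parent to child, in which every vertex at level `k ≤ n-1` has exactly `3`
children, every vertex at level `n` has exactly `c` children, the leaves (level `n+1`)
are the Right vertices and all other vertices are Left vertices. -/
def IsTnc (n c : ℕ) (T : Pos α) : Prop :=
  T.WF ∧ ∃ lvl : α → ℕ,
    (∀ v ∈ T.V, lvl v ≤ n + 1) ∧
    T.left = T.V.filter (fun v => lvl v ≤ n) ∧
    (∃! r, r ∈ T.V ∧ lvl r = 0) ∧
    (∀ p ∈ T.A, lvl p.2 = lvl p.1 + 1) ∧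
    (∀ v ∈ T.V, 0 < lvl v → ∃! u, (u, v) ∈ T.A) ∧
    (∀ v ∈ T.V, lvl v < n → (T.V.filter (fun w => (v, w) ∈ T.A)).card = 3) ∧
    (∀ v ∈ T.V, lvl v = n → (T.V.filter (fun w => (v, w) ∈ T.A)).card = c)

/-- `J` is (a copy of) `J_n^c`, the disjoint union of two disjoint copies of `T_n^c`. -/
def IsJnc (n c : ℕ) (J : Pos α) : Prop :=
  ∃ T1 T2 : Pos α, IsTnc n c T1 ∧ IsTnc n c T2 ∧ Disjoint T1.V T2.V ∧ J = T1.union T2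

end Influence

open Influence Influence.Pos Finset

namespace Influence.Pos

variable {α : Type} [DecidableEq α] {G : Pos α} {S T : Finset α} {a b u x y z : α}

def Reach (G : Pos α) : α → α → Prop := Relation.ReflTransGen fun a b => (a, b) ∈ G.A

lemma mem_R : z ∈ G.R ↔ z ∈ G.V ∧ z ∉ G.left := mem_sdiff

lemma mem_Succ : z ∈ G.Succ x ↔ z ∈ G.V ∧ G.Reach x z := by
  classical exact mem_filter

lemma mem_Pred : z ∈ G.Pred y ↔ z ∈ G.V ∧ G.Reach z y := by
  classical exact mem_filter

lemma WF.mem_V_of_reach (hwf : G.WF) (h : G.Reach a b) (hb : b ∈ G.V) : a ∈ G.V := by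
  rcases Relation.ReflTransGen.cases_head h with rfl | ⟨c, hac, -⟩
  exacts [hb, (hwf.1 _ hac).1]

lemma WF.relevant_iff (hwf : G.WF) : G.Relevant ↔
    (∀ x ∈ G.left, ∃ r ∈ G.R, G.Reach x r) ∧ (∀ y ∈ G.R, ∃ l ∈ G.left, G.Reach l y) := by
  simp only [Relevant, Forc, ForcL, ForcR, union_eq_empty, filter_eq_empty_iff, not_subset,
    mem_Succ, mem_Pred, mem_R, not_and, not_not]
  have hL : ∀ l, l ∈ G.V ∧ l ∈ G.left ↔ l ∈ G.left := fun l => and_iff_right_of_imp (hwf.2 ·)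
  grind

@[simp] lemma erase_V : (G.erase S).V = G.V \ S := rfl

@[simp] lemma erase_left : (G.erase S).left = G.left \ S := rfl

lemma erase_R : (G.erase S).R = G.R \ S := by
  ext; simp only [R, erase_V, erase_left, mem_sdiff]; tauto

lemma WF.erase (hwf : G.WF) (S : Finset α) : (G.erase S).WF :=
  ⟨fun _ hp => (mem_filter.1 hp).2, sdiff_subset_sdiff hwf.2 le_rfl⟩

lemma erase_erase : (G.erase S).erase T = G.erase (S ∪ T) := by
  simp only [Pos.erase, Pos.mk.injEq, sdiff_sdiff_left, sup_eq_union, filter_filter, true_and,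
    and_true]
  refine filter_congr fun p _ => ?_
  simp only [mem_sdiff, mem_union]
  tauto

lemma Reach.of_erase (h : (G.erase S).Reach a b) : G.Reach a b :=
  Relation.ReflTransGen.mono (fun _ _ hab => (mem_filter.1 hab).1) _ _ h

def PredClosed (G : Pos α) (S : Finset α) : Prop := ∀ ⦃a b⦄, G.Reach a b → b ∈ S → a ∈ S

lemma reach_erase_iff (hwf : G.WF) (hS : G.PredClosed S) (ha : a ∉ S) :
    (G.erase S).Reach a b ↔ G.Reach a b := by
  refine ⟨Reach.of_erase, fun h => ?_⟩
  induction h with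
  | refl => exact .refl
  | @tail c d hac hcd ih =>
    have hmem : ∀ {e}, G.Reach a e → e ∈ G.V → e ∈ G.V \ S := fun hae he =>
      mem_sdiff.2 ⟨he, fun heS => ha (hS hae heS)⟩
    exact ih.tail
      (mem_filter.2 ⟨hcd, hmem hac (hwf.1 _ hcd).1, hmem (hac.tail hcd) (hwf.1 _ hcd).2⟩)

lemma move_V : (G.move u).V = G.V \ G.Rmv u := rfl

lemma move_left : (G.move u).left = G.left \ G.Rmv u := rfl

lemma move_R : (G.move u).R = G.R \ G.Rmv u := erase_R

lemma mem_move_R (hy : y ∈ G.R) (hyu : y ∉ G.Rmv u) : y ∈ (G.move u).R :=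
  by rw [move_R]; exact mem_sdiff.2 ⟨hy, hyu⟩

lemma WF.move (hwf : G.WF) (u : α) : (G.move u).WF := hwf.erase _

lemma mem_Rmv_self (hu : u ∈ G.V) : u ∈ G.Rmv u := by
  unfold Rmv
  split_ifs
  exacts [mem_union_left _ (mem_Succ.2 ⟨hu, .refl⟩), mem_union_left _ (mem_Pred.2 ⟨hu, .refl⟩)]

lemma card_move_lt (hu : u ∈ G.V) : (G.move u).V.card < G.V.card :=
  card_lt_card <| (ssubset_iff_of_subset sdiff_subset).2
    ⟨u, hu, fun h => (mem_sdiff.1 h).2 (mem_Rmv_self hu)⟩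

def op (G : Pos α) : Pos α := ⟨G.V, G.A.image Prod.swap, G.R⟩

@[simp] lemma op_V : G.op.V = G.V := rfl

@[simp] lemma op_left : G.op.left = G.R := rfl

lemma op_R (hwf : G.WF) : G.op.R = G.left := Finset.sdiff_sdiff_eq_self hwf.2

lemma reach_op : G.op.Reach a b ↔ G.Reach b a := by
  have harc : ∀ a b, (a, b) ∈ G.op.A ↔ (b, a) ∈ G.A := fun a b => by simp [op]
  simp only [Reach, harc]
  exact Relation.reflTransGen_swap

lemma WF.op (hwf : G.WF) : G.op.WF := by
  refine ⟨fun p hp => ?_, sdiff_subset⟩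
  obtain ⟨q, hq, rfl⟩ := mem_image.1 hp
  exact (hwf.1 q hq).symm

lemma Succ_op : G.op.Succ x = G.Pred x := by
  ext; rw [mem_Succ, mem_Pred, op_V, reach_op]

lemma Pred_op : G.op.Pred x = G.Succ x := by
  ext; rw [mem_Succ, mem_Pred, op_V, reach_op]

lemma Forc_op (hwf : G.WF) : G.op.Forc = G.Forc := by
  have hL : G.op.ForcL = G.ForcR := by
    ext; simp only [ForcL, ForcR, mem_filter, op_left, Succ_op]
  have hR : G.op.ForcR = G.ForcL := by
    ext; simp only [ForcL, ForcR, mem_filter, op_R hwf, Pred_op]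
  rw [Forc, Forc, hL, hR, union_comm]

lemma op_erase : (G.erase S).op = G.op.erase S := by
  simp only [Pos.op, Pos.erase, R, Pos.mk.injEq, true_and]
  constructor
  · ext ⟨a, b⟩
    simp only [mem_image, mem_filter, Prod.exists, Prod.swap_prod_mk, Prod.mk.injEq]
    grind
  · ext; simp only [mem_sdiff]; tauto

lemma Rmv_op (hwf : G.WF) (hu : u ∈ G.V) : G.op.Rmv u = G.Rmv u := by
  by_cases h : u ∈ G.left
  · rw [Rmv, if_neg (by simp [R, h]), Rmv, if_pos h, Pred_op, ← op_erase,
      Forc_op (hwf.erase _)]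
  · rw [Rmv, if_pos (by simp [R, h, hu]), Rmv, if_neg h, Succ_op, ← op_erase,
      Forc_op (hwf.erase _)]

lemma move_op (hwf : G.WF) (hu : u ∈ G.V) : G.op.move u = (G.move u).op := by
  rw [move, move, Rmv_op hwf hu, op_erase]

lemma WF.relevant_op_iff (hwf : G.WF) : G.op.Relevant ↔ G.Relevant := by
  rw [hwf.op.relevant_iff, hwf.relevant_iff, op_left, op_R hwf, and_comm]
  simp only [reach_op]

open Classical in
noncomputable def rightRemoved (G : Pos α) (p : α → Prop) : Finset α :=
  G.V.filter fun z => ∀ w ∈ G.left, G.Reach w z → p w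

lemma mem_rightRemoved {p : α → Prop} :
    z ∈ G.rightRemoved p ↔ z ∈ G.V ∧ ∀ w ∈ G.left, G.Reach w z → p w := by
  classical exact mem_filter

lemma predClosed_Pred (hwf : G.WF) (u : α) : G.PredClosed (G.Pred u) := fun _ _ hab hb =>
  mem_Pred.2 ⟨hwf.mem_V_of_reach hab (mem_Pred.1 hb).1, hab.trans (mem_Pred.1 hb).2⟩

lemma ForcL_erase_eq_empty (hwf : G.WF) (hrel : G.Relevant) (hS : G.PredClosed S) :
    (G.erase S).ForcL = ∅ := by
  refine filter_eq_empty_iff.2 fun z hz hsub => ?_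
  obtain ⟨hzl, hzS⟩ := mem_sdiff.1 hz
  obtain ⟨r, hr, hzr⟩ := (hwf.relevant_iff.1 hrel).1 z hzl
  have hr' : r ∈ (G.erase S).Succ z := mem_Succ.2
    ⟨mem_sdiff.2 ⟨(mem_R.1 hr).1, fun h => hzS (hS hzr h)⟩, (reach_erase_iff hwf hS hzS).2 hzr⟩
  exact (mem_R.1 hr).2 (mem_sdiff.1 (hsub hr')).1

theorem Rmv_eq_rightRemoved (hwf : G.WF) (hrel : G.Relevant) (hu : u ∈ G.R) :
    G.Rmv u = G.rightRemoved (G.Reach · u) := by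
  have hP : G.PredClosed (G.Pred u) := predClosed_Pred hwf u
  rw [Rmv, if_neg (mem_R.1 hu).2, Forc, ForcL_erase_eq_empty hwf hrel hP, empty_union]
  set P := G.Pred u
  ext z
  rw [mem_union, mem_rightRemoved, ForcR, mem_filter, erase_R, mem_sdiff]
  constructor
  · rintro (hz | ⟨⟨hzR, hzP⟩, hsub⟩)
    · exact ⟨(mem_Pred.1 hz).1, fun w _ hwz => hwz.trans (mem_Pred.1 hz).2⟩
    refine ⟨(mem_R.1 hzR).1, fun w hw hwz => ?_⟩
    by_contra hwu
    have hwP : w ∉ P := fun h => hwu (mem_Pred.1 h).2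
    have hw' : w ∈ (G.erase P).Pred z :=
      mem_Pred.2 ⟨mem_sdiff.2 ⟨hwf.2 hw, hwP⟩, (reach_erase_iff hwf hP hwP).2 hwz⟩
    exact (mem_R.1 (mem_sdiff.1 (hsub hw')).1).2 hw
  · rintro ⟨hzV, hz⟩
    by_cases hzP : z ∈ P
    · exact Or.inl hzP
    have hnotP : ∀ {w}, w ∈ G.V → G.Reach w z → w ∉ P → w ∉ G.left := fun hw hwz hwP hwl =>
      hwP (mem_Pred.2 ⟨hw, hz _ hwl hwz⟩)
    refine Or.inr ⟨⟨mem_R.2 ⟨hzV, hnotP hzV .refl hzP⟩, hzP⟩, fun w hw => ?_⟩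
    obtain ⟨⟨hwV, hwP⟩, hwz⟩ := And.imp_left mem_sdiff.1 (mem_Pred.1 hw)
    exact mem_sdiff.2 ⟨mem_R.2 ⟨hwV, hnotP hwV hwz.of_erase hwP⟩, hwP⟩

open Classical in
noncomputable def leftRemoved (G : Pos α) (p : α → Prop) : Finset α :=
  G.V.filter fun z => ∀ w ∈ G.R, G.Reach z w → p w

lemma mem_leftRemoved {p : α → Prop} :
    z ∈ G.leftRemoved p ↔ z ∈ G.V ∧ ∀ w ∈ G.R, G.Reach z w → p w := by
  classical exact mem_filter

theorem Rmv_eq_leftRemoved (hwf : G.WF) (hrel : G.Relevant) (hx : x ∈ G.left) :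
    G.Rmv x = G.leftRemoved (G.Reach x) := by
  rw [← Rmv_op hwf (hwf.2 hx), Rmv_eq_rightRemoved hwf.op (hwf.relevant_op_iff.2 hrel)
    (op_R hwf ▸ hx)]
  ext
  simp only [mem_rightRemoved, mem_leftRemoved, op_V, op_left, reach_op]

lemma predClosed_Rmv (hwf : G.WF) (hrel : G.Relevant) (hu : u ∈ G.R) :
    G.PredClosed (G.Rmv u) := by
  intro a b hab hb
  rw [Rmv_eq_rightRemoved hwf hrel hu, mem_rightRemoved] at hb ⊢
  exact ⟨hwf.mem_V_of_reach hab hb.1, fun w hw hwa => hb.2 w hw (hwa.trans hab)⟩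

lemma reach_move_iff (hwf : G.WF) (hrel : G.Relevant) (hu : u ∈ G.R) (ha : a ∉ G.Rmv u) :
    (G.move u).Reach a b ↔ G.Reach a b :=
  reach_erase_iff hwf (predClosed_Rmv hwf hrel hu) ha

lemma mem_Rmv_iff_reach_of_mem_R (hwf : G.WF) (hrel : G.Relevant) (hx : x ∈ G.left)
    (hu : u ∈ G.R) : x ∈ G.Rmv u ↔ G.Reach x u := by
  rw [Rmv_eq_rightRemoved hwf hrel hu, mem_rightRemoved]
  exact ⟨fun h => h.2 x hx .refl, fun h => ⟨hwf.2 hx, fun w _ hwx => hwx.trans h⟩⟩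

lemma mem_Rmv_iff_reach_of_mem_left (hwf : G.WF) (hrel : G.Relevant) (hx : x ∈ G.left)
    (hu : u ∈ G.R) : u ∈ G.Rmv x ↔ G.Reach x u := by
  rw [Rmv_eq_leftRemoved hwf hrel hx, mem_leftRemoved]
  exact ⟨fun h => h.2 u hu .refl, fun h => ⟨(mem_R.1 hu).1, fun w _ huw => h.trans huw⟩⟩

lemma relevant_move_of_mem_R (hwf : G.WF) (hrel : G.Relevant) (hu : u ∈ G.R) :
    (G.move u).Relevant := by
  have hH := predClosed_Rmv hwf hrel hu
  obtain ⟨hL, hR⟩ := hwf.relevant_iff.1 hrel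
  refine (hwf.move u).relevant_iff.2 ⟨fun x hx => ?_, fun y hy => ?_⟩
  · obtain ⟨hxl, hxH⟩ := mem_sdiff.1 hx
    obtain ⟨r, hr, hxr⟩ := hL x hxl
    refine ⟨r, ?_, (reach_move_iff hwf hrel hu hxH).2 hxr⟩
    rw [move_R]
    exact mem_sdiff.2 ⟨hr, fun h => hxH (hH hxr h)⟩
  · rw [move_R] at hy
    obtain ⟨hyR, hyH⟩ := mem_sdiff.1 hy
    rw [Rmv_eq_rightRemoved hwf hrel hu, mem_rightRemoved] at hyH
    push Not at hyH
    obtain ⟨w, hw, hwy, hwu⟩ := hyH (mem_R.1 hyR).1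
    have hwH : w ∉ G.Rmv u := (mem_Rmv_iff_reach_of_mem_R hwf hrel hw hu).not.2 hwu
    exact ⟨w, mem_sdiff.2 ⟨hw, hwH⟩, (reach_move_iff hwf hrel hu hwH).2 hwy⟩

lemma Relevant.move (hwf : G.WF) (hrel : G.Relevant) (hu : u ∈ G.V) : (G.move u).Relevant := by
  by_cases hul : u ∈ G.left
  · rw [← (hwf.move u).relevant_op_iff, ← move_op hwf hu]
    exact relevant_move_of_mem_R hwf.op (hwf.relevant_op_iff.2 hrel) (op_R hwf ▸ hul)
  · exact relevant_move_of_mem_R hwf hrel (mem_R.2 ⟨hu, hul⟩)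

lemma rightRemoved_congr {p q : α → Prop} (h : ∀ w ∈ G.left, p w ↔ q w) :
    G.rightRemoved p = G.rightRemoved q := by
  ext z
  simp only [mem_rightRemoved]
  exact and_congr_right fun _ => forall₂_congr fun w hw => imp_congr_right fun _ => h w hw

lemma move_move : (G.move u).move y = G.erase (G.Rmv u ∪ (G.move u).Rmv y) := erase_erase

lemma disjoint_Rmv (hwf : G.WF) (hrel : G.Relevant) (hx : x ∈ G.left) (hu : u ∈ G.R)
    (hxu : ¬ G.Reach x u) : Disjoint (G.Rmv x) (G.Rmv u) := by
  rw [Rmv_eq_leftRemoved hwf hrel hx, Rmv_eq_rightRemoved hwf hrel hu]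
  refine disjoint_left.2 fun z hzx hzu => ?_
  obtain ⟨hzV, hzx⟩ := mem_leftRemoved.1 hzx
  obtain ⟨-, hzu⟩ := mem_rightRemoved.1 hzu
  by_cases hzl : z ∈ G.left
  · exact hxu (hzx u hu (hzu z hzl .refl))
  · exact hxu (hzu x hx (hzx z (mem_R.2 ⟨hzV, hzl⟩) .refl))

lemma Rmv_move_of_mem_R (hwf : G.WF) (hrel : G.Relevant) (hx : x ∈ G.left) (hu : u ∈ G.R)
    (hxu : ¬ G.Reach x u) : (G.move u).Rmv x = G.Rmv x := by
  have hH := predClosed_Rmv hwf hrel hu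
  have hxH : x ∉ G.Rmv u := (mem_Rmv_iff_reach_of_mem_R hwf hrel hx hu).not.2 hxu
  have hdisj := disjoint_Rmv hwf hrel hx hu hxu
  rw [Rmv_eq_leftRemoved (hwf.move u) (Relevant.move hwf hrel (mem_R.1 hu).1)
    (mem_sdiff.2 ⟨hx, hxH⟩)]
  rw [Rmv_eq_leftRemoved hwf hrel hx] at hdisj ⊢
  ext z
  by_cases hzH : z ∈ G.Rmv u
  · exact iff_of_false (fun h => (mem_sdiff.1 (mem_leftRemoved.1 h).1).2 hzH)
      fun h => disjoint_left.1 hdisj h hzH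
  rw [mem_leftRemoved, mem_leftRemoved, move_V, move_R, mem_sdiff, and_iff_left hzH]
  refine and_congr_right fun _ => forall_congr' fun w => ?_
  rw [reach_move_iff hwf hrel hu hzH, reach_move_iff hwf hrel hu hxH, mem_sdiff]
  exact ⟨fun h hw hzw => h ⟨hw, fun hwH => hzH (hH hzw hwH)⟩ hzw, fun h hw => h hw.1⟩

lemma Rmv_move_of_mem_left (hwf : G.WF) (hrel : G.Relevant) (hx : x ∈ G.left) (hu : u ∈ G.R)
    (hxu : ¬ G.Reach x u) : (G.move x).Rmv u = G.Rmv u := by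
  have huV : u ∈ (G.move x).V :=
    mem_sdiff.2 ⟨(mem_R.1 hu).1, (mem_Rmv_iff_reach_of_mem_left hwf hrel hx hu).not.2 hxu⟩
  rw [← Rmv_op (hwf.move x) huV, ← move_op hwf (hwf.2 hx),
    Rmv_move_of_mem_R hwf.op (hwf.relevant_op_iff.2 hrel) hu (op_R hwf ▸ hx)
      (reach_op.not.2 hxu), Rmv_op hwf (mem_R.1 hu).1]

lemma move_move_comm_of_mem_left (hwf : G.WF) (hrel : G.Relevant) (hx : x ∈ G.left)
    (hu : u ∈ G.R) (hxu : ¬ G.Reach x u) : (G.move u).move x = (G.move x).move u := by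
  rw [move_move, move_move, Rmv_move_of_mem_R hwf hrel hx hu hxu,
    Rmv_move_of_mem_left hwf hrel hx hu hxu, union_comm]

lemma move_move_of_mem_R (hwf : G.WF) (hrel : G.Relevant) (hu : u ∈ G.R) (hy : y ∈ G.R)
    (hyu : y ∉ G.Rmv u) :
    (G.move u).move y = G.erase (G.rightRemoved fun w => G.Reach w u ∨ G.Reach w y) := by
  have hHl := fun w (hw : w ∈ G.left) => mem_Rmv_iff_reach_of_mem_R hwf hrel hw hu
  rw [move_move, Rmv_eq_rightRemoved (hwf.move u) (Relevant.move hwf hrel (mem_R.1 hu).1)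
    (mem_move_R hy hyu)]
  congr 1
  ext z
  by_cases hzH : z ∈ G.Rmv u
  · have hz := hzH
    rw [Rmv_eq_rightRemoved hwf hrel hu, mem_rightRemoved] at hz
    exact iff_of_true (mem_union_left _ hzH)
      (mem_rightRemoved.2 ⟨hz.1, fun w hw hwz => Or.inl (hz.2 w hw hwz)⟩)
  rw [mem_union, mem_rightRemoved, mem_rightRemoved, move_V, move_left, mem_sdiff,
    or_iff_right hzH, and_iff_left hzH]
  refine and_congr_right fun _ => ⟨fun h w hw hwz => ?_, fun h w hw hwz => ?_⟩
  · by_cases hwu : G.Reach w u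
    · exact Or.inl hwu
    have hwH : w ∉ G.Rmv u := (hHl w hw).not.2 hwu
    have hmove := fun b => reach_move_iff (b := b) hwf hrel hu hwH
    exact Or.inr ((hmove y).1 (h w (mem_sdiff.2 ⟨hw, hwH⟩) ((hmove z).2 hwz)))
  · obtain ⟨hwl, hwH⟩ := mem_sdiff.1 hw
    rw [reach_move_iff hwf hrel hu hwH] at hwz ⊢
    exact (h w hwl hwz).resolve_left ((hHl w hwl).not.1 hwH)

lemma move_move_comm_of_mem_R (hwf : G.WF) (hrel : G.Relevant) (hu : u ∈ G.R) (hy : y ∈ G.R)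
    (hyu : y ∉ G.Rmv u) (huy : u ∉ G.Rmv y) : (G.move u).move y = (G.move y).move u := by
  rw [move_move_of_mem_R hwf hrel hu hy hyu, move_move_of_mem_R hwf hrel hy hu huy]
  simp only [or_comm]

lemma move_move_eq_move (hwf : G.WF) (hrel : G.Relevant) (hu : u ∈ G.R) (hy : y ∈ G.R)
    (hyu : y ∉ G.Rmv u) (huy : u ∈ G.Rmv y) : (G.move u).move y = G.move y := by
  rw [Rmv_eq_rightRemoved hwf hrel hy, mem_rightRemoved] at huy
  rw [move_move_of_mem_R hwf hrel hu hy hyu, move, Rmv_eq_rightRemoved hwf hrel hy]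
  exact congrArg G.erase (rightRemoved_congr fun w hw => or_iff_right_of_imp (huy.2 w hw))

lemma move_eq_move (hwf : G.WF) (hrel : G.Relevant) (hu : u ∈ G.R) (hy : y ∈ G.R)
    (hyu : y ∈ G.Rmv u) (huy : u ∈ G.Rmv y) : G.move u = G.move y := by
  rw [Rmv_eq_rightRemoved hwf hrel hu, mem_rightRemoved] at hyu
  rw [Rmv_eq_rightRemoved hwf hrel hy, mem_rightRemoved] at huy
  rw [move, move, Rmv_eq_rightRemoved hwf hrel hu, Rmv_eq_rightRemoved hwf hrel hy]
  exact congrArg G.erase (rightRemoved_congr fun w hw => ⟨huy.2 w hw, hyu.2 w hw⟩)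

lemma sLAux_succ (k : ℕ) : ∀ G : Pos α, G.WF → G.V.card ≤ k →
    sL1Aux (k + 1) G = sL1Aux k G ∧ sL2Aux (k + 1) G = sL2Aux k G := by
  induction k with
  | zero =>
    intro G hwf hcard
    have hV : G.V = ∅ := card_eq_zero.1 (Nat.le_zero.1 hcard)
    have hL : G.left = ∅ := subset_empty.1 (hV ▸ hwf.2)
    simp [sL1Aux, sL2Aux, hL, R, hV]
  | succ k ih =>
    intro G hwf hcard
    have hmove : ∀ u ∈ G.V, (G.move u).V.card ≤ k := fun u hu =>
      Nat.le_of_lt_succ ((card_move_lt hu).trans_le hcard)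
    constructor
    · rw [sL1Aux, sL1Aux]
      refine if_congr Iff.rfl (sup_congr rfl fun x hx => ?_) rfl
      rw [(ih _ (hwf.move x) (hmove x (hwf.2 hx))).2]
    · rw [sL2Aux, sL2Aux]
      refine dite_congr rfl (fun h => inf'_congr h rfl fun y hy => ?_) fun _ => rfl
      rw [(ih _ (hwf.move y) (hmove y (mem_R.1 hy).1)).1]

lemma sLAux_of_card_le (hwf : G.WF) {k : ℕ} (hk : G.V.card ≤ k) :
    sL1Aux k G = G.sL1 ∧ sL2Aux k G = G.sL2 := by
  induction k, hk using Nat.le_induction with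
  | base => exact ⟨rfl, rfl⟩
  | succ k hk ih =>
    obtain ⟨h1, h2⟩ := sLAux_succ k G hwf hk
    exact ⟨h1.trans ih.1, h2.trans ih.2⟩

lemma sL1_eq_sup (hwf : G.WF) :
    G.sL1 = G.left.sup fun x => (G.Rmv x).card + (G.move x).sL2 := by
  rw [sL1]
  rcases hk : G.V.card with _ | k
  · have hL : G.left = ∅ := subset_empty.1 (card_eq_zero.1 hk ▸ hwf.2)
    rw [sL1Aux, hL, sup_empty]; rfl
  rw [sL1Aux]
  split_ifs with hne
  · refine sup_congr rfl fun x hx => ?_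
    have := card_move_lt (G := G) (hwf.2 hx)
    rw [(sLAux_of_card_le (hwf.move x) (by omega)).2]
  · rw [not_nonempty_iff_eq_empty.1 hne, sup_empty]; rfl

lemma sL2_eq_inf' (hwf : G.WF) (hne : G.R.Nonempty) :
    G.sL2 = G.R.inf' hne fun y => (G.move y).sL1 := by
  obtain ⟨k, hk⟩ := Nat.exists_eq_add_one.2 (card_pos.2 (hne.mono sdiff_subset))
  rw [sL2, hk, sL2Aux, dif_pos hne]
  refine inf'_congr hne rfl fun y hy => ?_
  have := card_move_lt (G := G) (mem_R.1 hy).1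
  rw [(sLAux_of_card_le (hwf.move y) (by omega)).1]

lemma sL2_eq_zero (h : G.R = ∅) : G.sL2 = 0 := by
  rw [sL2]
  rcases G.V.card with _ | k
  · rfl
  · rw [sL2Aux, dif_neg (by simp [h])]

lemma sLAux_op (k : ℕ) : ∀ G : Pos α, G.WF →
    sL1Aux k G.op = sR1Aux k G ∧ sL2Aux k G.op = sR2Aux k G := by
  induction k with
  | zero => intro G _; exact ⟨rfl, rfl⟩
  | succ k ih =>
    intro G hwf
    constructor
    · rw [sL1Aux, sR1Aux, op_left]
      refine if_congr Iff.rfl (sup_congr rfl fun y hy => ?_) rfl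
      rw [Rmv_op hwf (mem_R.1 hy).1, move_op hwf (mem_R.1 hy).1,
        (ih _ (hwf.move y)).2]
    · rw [sL2Aux, sR2Aux]
      refine dite_congr (by rw [op_R hwf]) (fun h => inf'_congr _ (op_R hwf) fun x hx => ?_)
        fun _ => rfl
      rw [move_op hwf (mem_R.1 hx).1, (ih _ (hwf.move x)).1]

lemma sL1_op (hwf : G.WF) : G.op.sL1 = G.sR1 := (sLAux_op _ G hwf).1

lemma sL2_op (hwf : G.WF) : G.op.sL2 = G.sR2 := (sLAux_op _ G hwf).2

lemma le_sL1 (hwf : G.WF) (hx : x ∈ G.left) : (G.Rmv x).card + (G.move x).sL2 ≤ G.sL1 := by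
  rw [sL1_eq_sup hwf]
  exact le_sup (f := fun x => (G.Rmv x).card + (G.move x).sL2) hx

lemma sL2_le (hwf : G.WF) (hy : y ∈ G.R) : G.sL2 ≤ (G.move y).sL1 := by
  rw [sL2_eq_inf' hwf ⟨y, hy⟩]
  exact inf'_le _ hy

lemma exists_sL2_eq (hwf : G.WF) (hne : G.R.Nonempty) : ∃ y ∈ G.R, G.sL2 = (G.move y).sL1 := by
  rw [sL2_eq_inf' hwf hne]
  exact exists_mem_eq_inf' hne _

def RightMovesDecreaseLeftScores (G : Pos α) : Prop :=
  ∀ u ∈ G.R, (G.move u).sL1 ≤ G.sL1 ∧ (G.move u).sL2 ≤ G.sL2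

lemma RightMovesDecreaseLeftScores.sL2_le_sL1 (hwf : G.WF) (h : G.RightMovesDecreaseLeftScores) :
    G.sL2 ≤ G.sL1 := by
  rcases G.R.eq_empty_or_nonempty with hR | ⟨y, hy⟩
  · rw [sL2_eq_zero hR]
    exact Nat.zero_le _
  · exact (sL2_le hwf hy).trans (h y hy).1

lemma sL1_move_le (hwf : G.WF) (hrel : G.Relevant)
    (IH : ∀ x ∈ G.left, (G.move x).RightMovesDecreaseLeftScores) (hu : u ∈ G.R) :
    (G.move u).sL1 ≤ G.sL1 := by
  rw [sL1_eq_sup (hwf.move u)]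
  refine Finset.sup_le fun x hx => ?_
  obtain ⟨hxl, hxRu⟩ := mem_sdiff.1 hx
  have hxu : ¬ G.Reach x u := (mem_Rmv_iff_reach_of_mem_R hwf hrel hxl hu).not.1 hxRu
  have hu' := mem_move_R hu ((mem_Rmv_iff_reach_of_mem_left hwf hrel hxl hu).not.2 hxu)
  rw [Rmv_move_of_mem_R hwf hrel hxl hu hxu, move_move_comm_of_mem_left hwf hrel hxl hu hxu]
  exact (Nat.add_le_add_left (IH x hxl u hu').2 _).trans (le_sL1 hwf hxl)

lemma sL2_move_le (hwf : G.WF) (hrel : G.Relevant)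
    (IH : ∀ y ∈ G.R, (G.move y).RightMovesDecreaseLeftScores) (hu : u ∈ G.R) :
    (G.move u).sL2 ≤ G.sL2 := by
  obtain ⟨y, hy, hGy⟩ := exists_sL2_eq hwf ⟨u, hu⟩
  have hCy := (IH y hy).sL2_le_sL1 (hwf.move y)
  rw [hGy]
  by_cases hyu : y ∈ G.Rmv u
  · by_cases huy : u ∈ G.Rmv y
    · rwa [move_eq_move hwf hrel hu hy hyu huy]
    · rw [← move_move_eq_move hwf hrel hy hu huy hyu]
      exact (IH y hy u (mem_move_R hu huy)).2.trans hCy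
  · refine (sL2_le (hwf.move u) (mem_move_R hy hyu)).trans ?_
    by_cases huy : u ∈ G.Rmv y
    · rw [move_move_eq_move hwf hrel hu hy hyu huy]
    · rw [move_move_comm_of_mem_R hwf hrel hu hy hyu huy]
      exact (IH y hy u (mem_move_R hu huy)).1

theorem rightMovesDecreaseLeftScores (hwf : G.WF) (hrel : G.Relevant) :
    G.RightMovesDecreaseLeftScores := by
  induction hn : G.V.card using Nat.strong_induction_on generalizing G with
  | _ n ih =>
  have IH : ∀ v ∈ G.V, (G.move v).RightMovesDecreaseLeftScores := fun v hv =>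
    ih _ (hn ▸ card_move_lt hv) (hwf.move v) (Relevant.move hwf hrel hv) rfl
  exact fun u hu => ⟨sL1_move_le hwf hrel (fun x hx => IH x (hwf.2 hx)) hu,
    sL2_move_le hwf hrel (fun y hy => IH y (mem_R.1 hy).1) hu⟩

theorem sL2_le_sL1 (hwf : G.WF) (hrel : G.Relevant) : G.sL2 ≤ G.sL1 :=
  (rightMovesDecreaseLeftScores hwf hrel).sL2_le_sL1 hwf

end Influence.Pos

/-- influence is a nonzugzwang game. -/
theorem influence_nonzugzwang {α : Type} [DecidableEq α] (G : Pos α)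
    (hwf : G.WF) (hrel : G.Relevant) :
    G.sL2 ≤ G.sL1 ∧ G.sR2 ≤ G.sR1 ∧ G.Rs ≤ G.Ls := by
  have hL := sL2_le_sL1 hwf hrel
  have hR : G.sR2 ≤ G.sR1 := by
    simpa only [sL1_op hwf, sL2_op hwf] using sL2_le_sL1 hwf.op (hwf.relevant_op_iff.2 hrel)
  refine ⟨hL, hR, ?_⟩
  rw [Rs, Ls]
  omega
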